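/- Consider the Big-Match game of type II with player 1's non-quitting actions {T,B}, player 2's quitting action L* and non-quitting action R, and scalar payoffs g(T,L*) = 1, g(T,R) = 1, g(B,L*) = 0, g(B,R) = −1. Then: (i) the set C = {0} ⊆ ℝ does not satisfy Condition (1) (equivalently, there is no x ∈ Δ({T,B}) with g(x,R) = 0 and g(x,L*) = 0); yet (ii) C = {0} is weakly approachable by player 1. Hence Condition (1) is not necessary for weak approachability in Big-Match games of type II, and (combining (i) with the characterization of uniform approachability) {0} is weakly but not uniformly approachable. -/

import Mathlib

/-
Against the stationary action `R` of player 2, every `x` of player 1 leaves `φ` at distance at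
least `1/7` from `0` for `β = 0` or `β = δ_{L*}`, because `4 φ(x,α,R,δ_{L*}) - 3 φ(x,α,R,0) = 1`;
hence Condition (1) fails.

For a known horizon `T`, player 1 plays `T` at stage `t` with probability `(t-1)/(T-1)`. Quitting
then earns exactly what continuing earns, whatever player 2 does, and the expected total over
`T` stages is `0`.

Uniformly, a strategy keeping the average within `1/8` of `0` on every long horizon would have,
for each `k`, to play `T` at stage `k+1` with probability at most `1/4`, lest quitting there pay
too much; but then the payoff against a player 2 who never quits drifts to `-1/2` per stage.
-/

noncomputable section

namespace Example5

/-- Payoffs: `true` = `T`, `false` = `B` for player 1 (both non-quitting);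
`true` = `L*` (quitting), `false` = `R` (non-quitting) for player 2.
`g(T,L*) = 1, g(T,R) = 1, g(B,L*) = 0, g(B,R) = −1`. -/
def g : Bool → Bool → ℝ := fun i j =>
  if i then 1 else (if j then 0 else -1)

/-- Bilinear extension of `g`. -/
def mix (x y : Bool → ℝ) : ℝ := ∑ i : Bool, ∑ j : Bool, x i * y j * g i j

/-- Measure of absorption `p*`: a pair `(i,j)` is absorbing iff `j = L*`. -/
def pstar (α β : Bool → ℝ) : ℝ := ∑ i : Bool, ∑ j : Bool, if j then α i * β j else 0

/-- Expected absorption payoff `g*`. -/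
def gstar (α β : Bool → ℝ) : ℝ := ∑ i : Bool, ∑ j : Bool, if j then α i * β j * g i j else 0

/-- `φ(x,α,y,β) = (g(x,y) + g*(α,y) + g*(x,β)) / (1 + p*(α,y) + p*(x,β))`. -/
def phi (x α y β : Bool → ℝ) : ℝ :=
  (1 + pstar α y + pstar x β)⁻¹ * (mix x y + gstar α y + gstar x β)

/-- The quantity of Condition (1): `max_y min_x inf_α sup_β d_C(φ(x,α,y,β))`. -/
def cond1Val (C : Set ℝ) : ℝ :=
  ⨆ y : stdSimplex ℝ Bool, ⨅ x : stdSimplex ℝ Bool,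
    ⨅ α : {a : Bool → ℝ // ∀ i, 0 ≤ a i}, ⨆ β : {b : Bool → ℝ // ∀ j, 0 ≤ b j},
      Metric.infDist (phi x.1 α.1 y.1 β.1) C

/-- A behavioral strategy assigns a probability (of `T`, resp. of `L*`) to each
unabsorbed history, recorded as the list of player 1's realized actions
(player 2 having played `R` so far). -/
def ValidStrat (σ : List Bool → ℝ) : Prop := ∀ h, σ h ∈ Set.Icc (0 : ℝ) 1

/-- Expected sum of the payoffs of the next `n` stages from the unabsorbed history `h`:
with probability `τ h` player 2 quits and the payoff `g(i,L*)` is frozen forever. -/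
def expTotal (σ τ : List Bool → ℝ) : ℕ → List Bool → ℝ
  | 0, _ => 0
  | n + 1, h =>
      τ h * (((n : ℝ) + 1) * (σ h * g true true + (1 - σ h) * g false true))
        + (1 - τ h) * (σ h * (g true false + expTotal σ τ n (h ++ [true]))
            + (1 - σ h) * (g false false + expTotal σ τ n (h ++ [false])))

/-- Expected average payoff over the first `T` stages. -/
def avg (σ τ : List Bool → ℝ) (T : ℕ) : ℝ := (T : ℝ)⁻¹ * expTotal σ τ T []

/-- `{0}` is weakly approachable by player 1. -/
def WeaklyApproachableZero : Prop :=
  ∀ ε > (0:ℝ), ∃ T₀ : ℕ, ∀ T ≥ T₀, ∃ σ : List Bool → ℝ, ValidStrat σ ∧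
    ∀ τ : List Bool → ℝ, ValidStrat τ → |avg σ τ T| ≤ ε

/-- `{0}` is uniformly approachable by player 1. -/
def UniformlyApproachableZero : Prop :=
  ∀ ε > (0:ℝ), ∃ σ : List Bool → ℝ, ValidStrat σ ∧ ∃ T₀ : ℕ, ∀ T ≥ T₀,
    ∀ τ : List Bool → ℝ, ValidStrat τ → |avg σ τ T| ≤ ε

lemma abs_g_le_one (i j : Bool) : |g i j| ≤ 1 := by
  cases i <;> cases j <;> norm_num [g]

section Bounds

variable {x y α β : Bool → ℝ}

lemma pstar_nonneg (hα : ∀ i, 0 ≤ α i) (hβ : ∀ j, 0 ≤ β j) : 0 ≤ pstar α β :=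
  Finset.sum_nonneg fun i _ => Finset.sum_nonneg fun j _ => by
    split_ifs
    · exact mul_nonneg (hα i) (hβ j)
    · exact le_rfl

lemma abs_gstar_le_pstar (hα : ∀ i, 0 ≤ α i) (hβ : ∀ j, 0 ≤ β j) :
    |gstar α β| ≤ pstar α β := by
  refine (Finset.abs_sum_le_sum_abs _ _).trans (Finset.sum_le_sum fun i _ => ?_)
  refine (Finset.abs_sum_le_sum_abs _ _).trans (Finset.sum_le_sum fun j _ => ?_)
  have hαβ := mul_nonneg (hα i) (hβ j)
  split_ifs
  · rw [abs_mul, abs_of_nonneg hαβ]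
    exact mul_le_of_le_one_right hαβ (abs_g_le_one i j)
  · simp

lemma abs_mix_le_one (hx : x ∈ stdSimplex ℝ Bool) (hy : y ∈ stdSimplex ℝ Bool) :
    |mix x y| ≤ 1 :=
  calc |mix x y| ≤ ∑ i, ∑ j, x i * y j := by
        refine (Finset.abs_sum_le_sum_abs _ _).trans (Finset.sum_le_sum fun i _ => ?_)
        refine (Finset.abs_sum_le_sum_abs _ _).trans (Finset.sum_le_sum fun j _ => ?_)
        have hxy := mul_nonneg (hx.1 i) (hy.1 j)
        rw [abs_mul, abs_of_nonneg hxy]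
        exact mul_le_of_le_one_right hxy (abs_g_le_one i j)
    _ = 1 := by rw [← Finset.sum_mul_sum, hx.2, hy.2, one_mul]

lemma abs_phi_le_one (hx : x ∈ stdSimplex ℝ Bool) (hy : y ∈ stdSimplex ℝ Bool)
    (hα : ∀ i, 0 ≤ α i) (hβ : ∀ j, 0 ≤ β j) : |phi x α y β| ≤ 1 := by
  have hD : 0 < 1 + pstar α y + pstar x β := by
    linarith [pstar_nonneg hα hy.1, pstar_nonneg hx.1 hβ]
  rw [phi, abs_mul, abs_inv, abs_of_pos hD, inv_mul_le_iff₀ hD, mul_one]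
  linarith [abs_add_three (mix x y) (gstar α y) (gstar x β), abs_mix_le_one hx hy,
    abs_gstar_le_pstar hα hy.1, abs_gstar_le_pstar hx.1 hβ]

end Bounds

lemma phi_single_false (x α β : Bool → ℝ) :
    phi x α (Pi.single false 1) β =
      (1 + (x true + x false) * β true)⁻¹ * (x true - x false + x true * β true) := by
  simp [phi, mix, pstar, gstar, g]
  ring

lemma exists_one_seventh_le_abs_phi {x : Bool → ℝ} (hx : x ∈ stdSimplex ℝ Bool) (α : Bool → ℝ) :
    ∃ β : Bool → ℝ, (∀ j, 0 ≤ β j) ∧ 1 / 7 ≤ |phi x α (Pi.single false 1) β| := by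
  have hsum : x true + x false = 1 := by simpa [Fintype.sum_bool] using hx.2
  have key : 4 * phi x α (Pi.single false 1) (Pi.single true 1)
      - 3 * phi x α (Pi.single false 1) 0 = 1 := by
    simp only [phi_single_false, hsum]
    norm_num
    linarith
  by_contra! h
  have h0 := abs_lt.1 (h 0 fun _ => le_rfl)
  have h1 := abs_lt.1 (h (Pi.single true 1) fun j => by cases j <;> simp)
  linarith [h0.1, h0.2, h1.1, h1.2]

theorem le_iSup_iInf_iInf_iSup {ι κ ν μ : Type*} [Nonempty κ] [Nonempty ν] [Nonempty μ]
    {f : ι → κ → ν → μ → ℝ} {B c : ℝ} (hf : ∀ i k l m, f i k l m ∈ Set.Icc 0 B) (i : ι)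
    (hc : ∀ k l, ∃ m, c ≤ f i k l m) : c ≤ ⨆ i, ⨅ k, ⨅ l, ⨆ m, f i k l m := by
  have hsup_bdd : ∀ i k l, BddAbove (Set.range (f i k l)) :=
    fun i k l => ⟨B, Set.forall_mem_range.2 fun m => (hf i k l m).2⟩
  have hsup_nonneg : ∀ i k l, 0 ≤ ⨆ m, f i k l m :=
    fun i k l => Real.iSup_nonneg fun m => (hf i k l m).1
  have hval_le : ∀ i, ⨅ k, ⨅ l, ⨆ m, f i k l m ≤ B := fun i =>
    ciInf_le_of_le ⟨0, Set.forall_mem_range.2 fun k => Real.iInf_nonneg (hsup_nonneg i k)⟩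
      (Classical.arbitrary κ) <|
    ciInf_le_of_le ⟨0, Set.forall_mem_range.2 (hsup_nonneg i _)⟩ (Classical.arbitrary ν) <|
    ciSup_le fun m => (hf i _ _ m).2
  refine le_ciSup_of_le ⟨B, Set.forall_mem_range.2 hval_le⟩ i <|
    le_ciInf fun k => le_ciInf fun l => ?_
  obtain ⟨m, hm⟩ := hc k l
  exact le_ciSup_of_le (hsup_bdd i k l) m hm

lemma cond1Val_zero_pos : 0 < cond1Val ({0} : Set ℝ) := by
  have : Nonempty {a : Bool → ℝ // ∀ i, 0 ≤ a i} := ⟨⟨0, fun _ => le_rfl⟩⟩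
  refine lt_of_lt_of_le (by norm_num : (0 : ℝ) < 1 / 7) <|
    le_iSup_iInf_iInf_iSup (B := 1) (fun y x α β => ?_) ⟨_, single_mem_stdSimplex ℝ false⟩
      fun x α => ?_
  · rw [Metric.infDist_singleton, Real.dist_eq, sub_zero]
    exact ⟨abs_nonneg _, abs_phi_le_one x.2 y.2 α.2 β.2⟩
  · obtain ⟨β, hβ, h⟩ := exists_one_seventh_le_abs_phi x.2 α.1
    refine ⟨⟨β, hβ⟩, ?_⟩
    rwa [Metric.infDist_singleton, Real.dist_eq, sub_zero]

lemma abs_convex_comb_le {p a b M : ℝ} (hp : p ∈ Set.Icc 0 1) (ha : |a| ≤ M) (hb : |b| ≤ M) :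
    |p * a + (1 - p) * b| ≤ M := by
  obtain ⟨hp0, hp1⟩ := hp
  rw [abs_le] at *
  constructor <;> nlinarith

section Play

variable {σ τ : List Bool → ℝ}

theorem abs_expTotal_le (hσ : ValidStrat σ) (hτ : ValidStrat τ) :
    ∀ n h, |expTotal σ τ n h| ≤ n
  | 0, _ => by simp [expTotal]
  | n + 1, h => by
    have hquit : |((n : ℝ) + 1) * (σ h * g true true + (1 - σ h) * g false true)| ≤ n + 1 := by
      rw [abs_mul, abs_of_pos (by positivity)]
      exact mul_le_of_le_one_right (by positivity)
        (abs_convex_comb_le (hσ h) (abs_g_le_one _ _) (abs_g_le_one _ _))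
    have hstay : ∀ i, |g i false + expTotal σ τ n (h ++ [i])| ≤ n + 1 := fun i =>
      (abs_add_le _ _).trans <| by
        linarith [abs_g_le_one i false, abs_expTotal_le hσ hτ n (h ++ [i])]
    push_cast
    exact abs_convex_comb_le (hτ h) hquit (abs_convex_comb_le (hσ h) (hstay true) (hstay false))

lemma expTotal_succ_of_quit {h : List Bool} (hτ : τ h = 1) (n : ℕ) :
    expTotal σ τ (n + 1) h = (n + 1) * σ h := by
  simp [expTotal, hτ, g]

lemma expTotal_succ_of_continue {h : List Bool} (hτ : τ h = 0) (n : ℕ) :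
    expTotal σ τ (n + 1) h = σ h * (1 + expTotal σ τ n (h ++ [true]))
      + (1 - σ h) * (-1 + expTotal σ τ n (h ++ [false])) := by
  simp [expTotal, hτ, g]

end Play

def indifferentStrategy (T : ℕ) : List Bool → ℝ := fun h => min (h.length / ((T : ℝ) - 1)) 1

lemma validStrat_indifferentStrategy {T : ℕ} (hT : 2 ≤ T) :
    ValidStrat (indifferentStrategy T) := fun h => by
  have hT' : (2 : ℝ) ≤ T := by exact_mod_cast hT
  exact ⟨le_min (div_nonneg h.length.cast_nonneg (by linarith)) zero_le_one, min_le_right _ _⟩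

theorem expTotal_indifferentStrategy {T : ℕ} (hT : 2 ≤ T) (τ : List Bool → ℝ) :
    ∀ n h, h.length + n = T → expTotal (indifferentStrategy T) τ n h = n * (T - n) / (T - 1)
  | 0, _, _ => by simp [expTotal]
  | n + 1, h, hlen => by
    have hT' : (2 : ℝ) ≤ T := by exact_mod_cast hT
    have hlen' : (h.length : ℝ) = T - 1 - n := by
      have : (h.length : ℝ) + (n + 1) = T := by exact_mod_cast hlen
      linarith
    have hσ : indifferentStrategy T h = (T - 1 - n) / (T - 1) := by
      rw [indifferentStrategy, hlen', min_eq_left ((div_le_one (by linarith)).2 (by linarith))]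
    have hnext : ∀ i, expTotal (indifferentStrategy T) τ n (h ++ [i]) = n * (T - n) / (T - 1) :=
      fun i => expTotal_indifferentStrategy hT τ n _ (by simp; omega)
    have hT1 : (T : ℝ) - 1 ≠ 0 := by linarith
    rw [expTotal, hnext, hnext, hσ]
    simp only [g]
    field_simp
    push_cast
    ring

theorem weaklyApproachableZero : WeaklyApproachableZero := fun ε hε =>
  ⟨2, fun T hT => ⟨indifferentStrategy T, validStrat_indifferentStrategy hT, fun τ _ => by
    rw [avg, expTotal_indifferentStrategy hT τ T [] (zero_add T), sub_self, mul_zero,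
      zero_div, mul_zero, abs_zero]
    exact hε.le⟩⟩

def never : List Bool → ℝ := fun _ => 0

def quitAt (d : ℕ) : List Bool → ℝ := fun h => if h.length = d then 1 else 0

lemma validStrat_never : ValidStrat never := fun _ => ⟨le_rfl, zero_le_one⟩

lemma validStrat_quitAt (d : ℕ) : ValidStrat (quitAt d) := fun h => by
  unfold quitAt; split_ifs <;> norm_num

/-- `(N (k+1) - N k + 1) / 2`, with `N` the expected totals against `never`, is the probability
that player 1 plays `T` at stage `k + 1`. -/
theorem expTotal_quitAt (σ : List Bool → ℝ) :
    ∀ k n (h : List Bool), k < n →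
      expTotal σ (quitAt (h.length + k)) n h = expTotal σ never k h +
        (n - k) * ((expTotal σ never (k + 1) h - expTotal σ never k h + 1) / 2)
  | _, 0, _, hk => absurd hk (Nat.not_lt_zero _)
  | 0, m + 1, h, _ => by
    rw [expTotal_succ_of_quit (by simp [quitAt]), expTotal_succ_of_continue rfl]
    simp only [expTotal]
    push_cast
    ring
  | k + 1, m + 1, h, hk => by
    have hstep : ∀ i, expTotal σ (quitAt (h.length + (k + 1))) m (h ++ [i]) =
        expTotal σ never k (h ++ [i]) + (m - k) * ((expTotal σ never (k + 1) (h ++ [i])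
          - expTotal σ never k (h ++ [i]) + 1) / 2) := fun i => by
      have hlen : (h ++ [i]).length + k = h.length + (k + 1) := by simp; omega
      rw [← hlen]
      exact expTotal_quitAt σ k m _ (by omega)
    rw [expTotal_succ_of_continue (by simp [quitAt]), hstep, hstep,
      expTotal_succ_of_continue (τ := never) (h := h) rfl (k + 1),
      expTotal_succ_of_continue (τ := never) (h := h) rfl k]
    push_cast
    ring

section NotUniform

variable {σ : List Bool → ℝ} {T₀ : ℕ}

lemma expTotal_never_succ_sub_le (hσ : ValidStrat σ)
    (hT₀ : ∀ T ≥ T₀, ∀ τ, ValidStrat τ → |avg σ τ T| ≤ 1 / 8) (k : ℕ) :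
    expTotal σ never (k + 1) [] - expTotal σ never k [] ≤ -1 / 2 := by
  set n := max T₀ (10 * k + 1)
  have hkn : (10 * k + 1 : ℝ) ≤ n := by exact_mod_cast le_max_right T₀ (10 * k + 1)
  have hquit := (abs_le.1 (hT₀ n (le_max_left _ _) (quitAt k) (validStrat_quitAt k))).2
  have hdecomp := expTotal_quitAt σ k n [] (by omega)
  rw [List.length_nil, zero_add] at hdecomp
  rw [avg, hdecomp, inv_mul_le_iff₀ (by linarith)] at hquit
  have hNk := (abs_le.1 (abs_expTotal_le hσ validStrat_never k [])).1
  have hp : (expTotal σ never (k + 1) [] - expTotal σ never k [] + 1) / 2 ≤ 1 / 4 := by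
    refine le_of_mul_le_mul_left (a := (n : ℝ) - k) ?_ (by linarith)
    linarith
  linarith

lemma expTotal_never_le (hσ : ValidStrat σ)
    (hT₀ : ∀ T ≥ T₀, ∀ τ, ValidStrat τ → |avg σ τ T| ≤ 1 / 8) :
    ∀ n : ℕ, expTotal σ never n [] ≤ -n / 2
  | 0 => by simp [expTotal]
  | n + 1 => by
    push_cast
    linarith [expTotal_never_succ_sub_le hσ hT₀ n, expTotal_never_le hσ hT₀ n]

end NotUniform

theorem not_uniformlyApproachableZero : ¬ UniformlyApproachableZero := by
  intro H
  obtain ⟨σ, hσ, T₀, hT₀⟩ := H (1 / 8) (by norm_num)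
  set n := max T₀ 1
  have hn : (1 : ℝ) ≤ n := by exact_mod_cast le_max_right T₀ 1
  have hnever := (abs_le.1 (hT₀ n (le_max_left _ _) never validStrat_never)).1
  rw [avg, le_inv_mul_iff₀ (by linarith)] at hnever
  linarith [expTotal_never_le hσ hT₀ n]

/-- (i) `C = {0}` does not satisfy Condition (1) — equivalently, there is
no `x ∈ Δ({T,B})` with `g(x,R) = 0` and `g(x,L*) = 0` — yet (ii) `{0}` is weakly
approachable by player 1; hence `{0}` is weakly but not uniformly approachable. -/
theorem zero_weakly_but_not_uniformly_approachable :
    cond1Val ({0} : Set ℝ) ≠ 0 ∧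
    (¬ ∃ x ∈ stdSimplex ℝ Bool,
        x true * g true false + x false * g false false = 0 ∧
        x true * g true true + x false * g false true = 0) ∧
    WeaklyApproachableZero ∧
    ¬ UniformlyApproachableZero := by
  refine ⟨cond1Val_zero_pos.ne', ?_, weaklyApproachableZero, not_uniformlyApproachableZero⟩
  rintro ⟨x, hx, hR, hL⟩
  have hsum : x true + x false = 1 := by simpa [Fintype.sum_bool] using hx.2
  simp only [g] at hR hL
  norm_num at hR hL
  linarith

end Example5

end
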